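/- Let (f, Q, ξᵢ, ηⁱ) (i = 1,…,s) be a framed weak f-structure on a manifold M of dimension 2n+s, i.e., f and Q are (1,1)-tensors with Q nonsingular, f² = -Q + Σᵢ ηⁱ ⊗ ξᵢ, ηⁱ(ξⱼ) = δⁱⱼ, Q ξᵢ = ξᵢ, and the distribution D = ⋂ᵢ ker ηⁱ is f-invariant. Then f ξᵢ = 0, ηⁱ ∘ f = 0, ηⁱ ∘ Q = ηⁱ, and Q commutes with f (pointwise, as endomorphisms of each tangent space). -/
import Mathlib


/-- Basic identities of a framed weak f-structure, formalized pointwise on a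
finite-dimensional real vector space `V` of dimension `2n+s`:
`f ξᵢ = 0`, `ηⁱ ∘ f = 0`, `ηⁱ ∘ Q = ηⁱ`, and `[Q, f] = 0`. -/
theorem stmt1 {V : Type*} [AddCommGroup V] [Module ℝ V] [FiniteDimensional ℝ V]
    {n s : ℕ} (hdim : Module.finrank ℝ V = 2 * n + s)
    (f Q : V →ₗ[ℝ] V) (hQ : Function.Bijective Q)
    (ξ : Fin s → V) (η : Fin s → V →ₗ[ℝ] ℝ)
    (hrank : Module.finrank ℝ (LinearMap.range f) = 2 * n)
    (hf2 : ∀ x, f (f x) = -Q x + ∑ i, η i x • ξ i)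
    (hηξ : ∀ i j, η i (ξ j) = if i = j then 1 else 0)
    (hQξ : ∀ i, Q (ξ i) = ξ i)
    (hD : ∀ x : V, (∀ i, η i x = 0) → ∀ i, η i (f x) = 0) :
    (∀ i, f (ξ i) = 0) ∧ (∀ i x, η i (f x) = 0) ∧
    (∀ i x, η i (Q x) = η i x) ∧ (∀ x, Q (f x) = f (Q x)) := by
  classical
  set D : Submodule ℝ V := ⨅ i, LinearMap.ker (η i) with hDdef
  have hmemD : ∀ x : V, x ∈ D ↔ ∀ i, η i x = 0 := by
    intro x; simp [hDdef, Submodule.mem_iInf, LinearMap.mem_ker]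
  have hf2D : ∀ x ∈ D, f (f x) = -Q x := by
    intro x hx
    rw [hf2]
    simp [(hmemD x).1 hx]
  have hfξ2 : ∀ j, f (f (ξ j)) = 0 := by
    intro j
    rw [hf2, hQξ]
    simp [hηξ, ite_smul, Finset.sum_ite_eq]
  have hkerD : LinearMap.ker f ⊓ D = ⊥ := by
    rw [Submodule.eq_bot_iff]
    rintro x ⟨hx1, hx2⟩
    have h1 : f (f x) = -Q x := hf2D x hx2
    rw [LinearMap.mem_ker.mp hx1, map_zero] at h1
    have h2 : Q x = 0 := neg_eq_zero.mp h1.symm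
    exact hQ.injective (by rw [h2, map_zero])
  -- dimension of ker f is s
  have hkerdim : Module.finrank ℝ (LinearMap.ker f) = s := by
    have h := LinearMap.finrank_range_add_finrank_ker f
    omega
  -- dim D ≥ 2n
  have hDge : 2 * n ≤ Module.finrank ℝ D := by
    have hD' : D = LinearMap.ker (LinearMap.pi η) := by
      rw [LinearMap.ker_pi]
    have h1 := LinearMap.finrank_range_add_finrank_ker (LinearMap.pi η)
    have h2 : Module.finrank ℝ (LinearMap.range (LinearMap.pi η)) ≤ s := by
      refine le_trans (Submodule.finrank_le _) ?_
      simp [Module.finrank_pi]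
    rw [← hD'] at h1
    omega
  have hsum := Submodule.finrank_sup_add_finrank_inf_eq (LinearMap.ker f) D
  rw [hkerD] at hsum
  have hle : Module.finrank ℝ ((LinearMap.ker f ⊔ D : Submodule ℝ V)) ≤ Module.finrank ℝ V :=
    Submodule.finrank_le _
  simp [finrank_bot] at hsum
  have hDdim : Module.finrank ℝ D = 2 * n := by omega
  -- f maps D into D
  have hmapfD : Submodule.map f D ≤ D := by
    rintro y ⟨x, hx, rfl⟩
    exact (hmemD _).2 (hD x ((hmemD x).1 hx))
  -- map Q D ≤ map f D
  have hQD_le : Submodule.map Q D ≤ Submodule.map f D := by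
    rintro y ⟨x, hx, rfl⟩
    refine ⟨f (-x), hmapfD ⟨-x, D.neg_mem hx, rfl⟩, ?_⟩
    rw [map_neg, map_neg, hf2D x hx, neg_neg]
  -- finrank map Q D = 2n
  have hQDdim : Module.finrank ℝ (Submodule.map Q D) = 2 * n := by
    rw [show Submodule.map Q D
        = Submodule.map (LinearEquiv.ofBijective Q hQ : V →ₗ[ℝ] V) D from rfl,
      LinearEquiv.finrank_map_eq (LinearEquiv.ofBijective Q hQ) D, hDdim]
  have hfDdim_ge : 2 * n ≤ Module.finrank ℝ (Submodule.map f D) :=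
    hQDdim ▸ Submodule.finrank_mono hQD_le
  have hfDeq : Submodule.map f D = D :=
    Submodule.eq_of_le_of_finrank_le hmapfD (by omega)
  have hrangeD : LinearMap.range f = D := by
    have h1 : Submodule.map f D ≤ LinearMap.range f := LinearMap.map_le_range
    have h2 : Submodule.map f D = LinearMap.range f :=
      Submodule.eq_of_le_of_finrank_le h1 (by rw [hfDeq, hDdim, hrank])
    rw [← h2, hfDeq]
  have hQDeq : Submodule.map Q D = D := by
    refine Submodule.eq_of_le_of_finrank_le (le_trans hQD_le hmapfD) ?_
    rw [hQDdim, hDdim]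
  -- f ξ = 0
  have hfξ : ∀ i, f (ξ i) = 0 := by
    intro i
    have h1 : f (ξ i) ∈ D := hrangeD ▸ LinearMap.mem_range_self f (ξ i)
    have h2 : f (ξ i) ∈ LinearMap.ker f := LinearMap.mem_ker.mpr (hfξ2 i)
    simpa [hkerD] using Submodule.mem_inf.mpr ⟨h2, h1⟩
  -- η ∘ f = 0
  have hηf : ∀ i x, η i (f x) = 0 := by
    intro i x
    exact (hmemD _).1 (hrangeD ▸ LinearMap.mem_range_self f x) i
  refine ⟨hfξ, hηf, ?_, ?_⟩
  · -- η ∘ Q = η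
    intro i x
    have hd : x - ∑ j, η j x • ξ j ∈ D := by
      rw [hmemD]
      intro k
      simp [map_sum, map_smul, hηξ, mul_ite, Finset.sum_ite_eq]
    have hQd : Q (x - ∑ j, η j x • ξ j) ∈ D := hQDeq ▸ Submodule.mem_map_of_mem hd
    have h1 : η i (Q (x - ∑ j, η j x • ξ j)) = 0 := (hmemD _).1 hQd i
    have h2 : Q x = Q (x - ∑ j, η j x • ξ j) + ∑ j, η j x • ξ j := by
      rw [map_sub, map_sum]
      simp [map_smul, hQξ]
    rw [h2, map_add, h1, zero_add]
    simp [map_sum, map_smul, hηξ, mul_ite, Finset.sum_ite_eq]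
  · -- commute
    intro x
    have hd : x - ∑ j, η j x • ξ j ∈ D := by
      rw [hmemD]
      intro k
      simp [map_sum, map_smul, hηξ, mul_ite, Finset.sum_ite_eq]
    set d := x - ∑ j, η j x • ξ j with hddef
    have hx : x = d + ∑ j, η j x • ξ j := by rw [hddef]; abel
    have hcd : Q (f d) = f (Q d) := by
      have hfd : f d ∈ D := (hmemD _).2 (hD d ((hmemD d).1 hd))
      have h1 : f (f (f d)) = -Q (f d) := hf2D (f d) hfd
      have h2 : f (f d) = -Q d := hf2D d hd
      have : f (f (f d)) = f (-Q d) := by rw [← h2]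
      rw [h1, map_neg] at this
      exact neg_injective this
    rw [hx]
    simp only [map_add, map_sum, map_smul, hQξ, hfξ, smul_zero, Finset.sum_const_zero,
      add_zero, hcd]
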